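/- Let f : ℍ → ℂ be a conformal (univalent analytic) map of the upper half plane, let z₀ = x₀ + i y₀ ∈ ℍ, let E ⊂ (x₀ − y₀/2, x₀ + y₀/2) be a nonempty compact set, and suppose there is a constant K ≥ 1 such that (1/K) |f'(z₀)| ≤ |f'(w)| ≤ K |f'(z₀)| for every w in the sawtooth region S(E) := { x + iy : x ∈ (x₀ − y₀/2, x₀ + y₀/2), dist(x, E) ≤ y < y₀ }. Then f(S(E)) is a John domain whose John constant depends only on K. -/

import Mathlib

open Set Metric MeasureTheory Filter Topology
open scoped ENNReal NNReal

noncomputable section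

/-- The open upper half plane in `ℂ`. -/
def UHP : Set ℂ := {z : ℂ | 0 < z.im}

/-- The `α`-dimensional Hausdorff content of a set. -/
def hContent {X : Type*} [PseudoEMetricSpace X] (α : ℝ) (A : Set X) : ℝ≥0∞ :=
  ⨅ (E : ℕ → Set X) (_ : A ⊆ ⋃ n, E n), ∑' n, EMetric.diam (E n) ^ α

/-- `Ω` is a `C`-John domain with center `z₀`: every point of `Ω` can be joined to `z₀`
by a rectifiable curve in `Ω` along which the distance to the boundary dominates
(up to the factor `C`) the length of the subcurve already traversed. -/
def IsJohnDomain (C : ℝ) (Ω : Set ℂ) (z₀ : ℂ) : Prop :=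
  z₀ ∈ Ω ∧ ∀ z ∈ Ω, ∃ γ : ℝ → ℂ,
    ContinuousOn γ (Set.Icc 0 1) ∧ γ 0 = z ∧ γ 1 = z₀ ∧
    (∀ t ∈ Set.Icc (0:ℝ) 1, γ t ∈ Ω) ∧
    eVariationOn γ (Set.Icc 0 1) ≠ ⊤ ∧
    ∀ t ∈ Set.Icc (0:ℝ) 1,
      (eVariationOn γ (Set.Icc 0 t)).toReal ≤ C * infDist (γ t) (frontier Ω)

/-- `u` is harmonic on the upper half plane: it is `C²` there and satisfies
`u_xx + u_yy = 0`. -/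
def HarmonicOnH (u : ℂ → ℝ) : Prop :=
  ContDiffOn ℝ 2 u UHP ∧ ∀ z ∈ UHP,
    fderiv ℝ (fun w => fderiv ℝ u w 1) z 1 +
      fderiv ℝ (fun w => fderiv ℝ u w Complex.I) z Complex.I = 0

/-- For an interval `I = [c, d]`, the point `z_I = x_I + i |I|` where `x_I` is the center. -/
def zI (c d : ℝ) : ℂ := ((c + d) / 2 : ℝ) + (d - c) * Complex.I

/-- The square `Q(I) = {x + iy : x ∈ I, 0 < y < |I|}` over the interval `I = [c, d]`. -/
def Qsq (c d : ℝ) : Set ℂ := {z : ℂ | z.re ∈ Set.Icc c d ∧ z.im ∈ Set.Ioo 0 (d - c)}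

/-- `[c, d]` is a dyadic subinterval of `[a, b]`, i.e. obtained by repeated bisection. -/
def IsDyadicSub (a b c d : ℝ) : Prop :=
  ∃ n k : ℕ, k < 2 ^ n ∧ c = a + k * (b - a) / 2 ^ n ∧ d = a + (k + 1) * (b - a) / 2 ^ n

/-- The family `F(I)` of maximal dyadic subintervals `J` of `I = [a, b]` with
`|u(z_J) - u(z_I)| ≥ M`, encoded as pairs of endpoints. -/
def MaxF (u : ℂ → ℝ) (a b M : ℝ) : Set (ℝ × ℝ) :=
  {p : ℝ × ℝ | IsDyadicSub a b p.1 p.2 ∧ M ≤ |u (zI p.1 p.2) - u (zI a b)| ∧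
    ∀ c d : ℝ, IsDyadicSub a b c d → M ≤ |u (zI c d) - u (zI a b)| →
      Set.Icc p.1 p.2 ⊆ Set.Icc c d → c = p.1 ∧ d = p.2}

/-- The set `G(I)` of points `x` of `I = [a, b]` over whose whole vertical segment in `Q(I)`
the oscillation `|u - u(z_I)|` is at most `M + A√2`. -/
def GSet (u : ℂ → ℝ) (a b M A : ℝ) : Set ℝ :=
  {x ∈ Set.Icc a b | ∀ y : ℝ, 0 < y → y < b - a →
    |u ((x : ℂ) + y * Complex.I) - u (zI a b)| ≤ M + A * Real.sqrt 2}

/-- The sawtooth region `S(E)` over `E ⊆ (x₀ - y₀/2, x₀ + y₀/2)`. -/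
def Sawtooth (E : Set ℝ) (x₀ y₀ : ℝ) : Set ℂ :=
  {z : ℂ | z.re ∈ Set.Ioo (x₀ - y₀ / 2) (x₀ + y₀ / 2) ∧ 0 < z.im ∧
    infDist z.re E ≤ z.im ∧ z.im < y₀}

/-! The John center is `q = x₀ + (3/4) i y₀` and the John curve from `p ∈ S(E)` is the segment
`[p, q]`. For `e ∈ E` closest to `Re p`, the margins `Re z - (x₀ - y₀/2)`, `(x₀ + y₀/2) - Re z`,
`y₀ - Im z` and `Im z - |Re z - e|` are concave in `z`, nonnegative at `p` and at least `y₀/4` at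
`q`, so the point at time `t` of the segment is the center of a disc of radius `t y₀ / 8` inside
`S(E)`. On `S(E)` we have `m / K ≤ |f'| ≤ K m` with `m = |f'(z₀)|`, so the image curve has length
at most `2 K m y₀ t` up to time `t`, while the Schwarz lemma for `f'` and the open mapping theorem
show that the image of that disc contains a disc of radius `m y₀ t / (256 K³)` about the image
point. Hence `f(S(E))` is `512 K⁴`-John. -/

theorem isOpen_UHP : IsOpen UHP := isOpen_lt continuous_const Complex.continuous_im

theorem LipschitzOnWith.eVariationOn_Icc_le {X : Type*} [PseudoEMetricSpace X] {f : ℝ → X}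
    {L : ℝ≥0} {a b : ℝ} (hf : LipschitzOnWith L f (Icc a b)) :
    eVariationOn f (Icc a b) ≤ L * ENNReal.ofReal (b - a) := by
  simpa using hf.comp_eVariationOn_le (g := id) (mapsTo_id _)

theorem le_infDist_frontier_of_ball_subset {X : Type*} [PseudoMetricSpace X] {s : Set X} {x : X}
    {r : ℝ} (hs : (frontier s).Nonempty) (h : ball x r ⊆ s) : r ≤ infDist x (frontier s) :=
  (le_infDist hs).2 fun _ hy => not_lt.1 fun hlt =>
    hy.2 (interior_maximal h isOpen_ball (mem_ball'.2 hlt))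

theorem isJohnDomain_of_lipschitz_curves {Ω : Set ℂ} {w₀ : ℂ} {C : ℝ} {L : ℝ≥0} (hC : 0 < C)
    (hw₀ : w₀ ∈ Ω)
    (hcurve : ∀ w ∈ Ω, ∃ γ : ℝ → ℂ, γ 0 = w ∧ γ 1 = w₀ ∧ LipschitzOnWith L γ (Icc 0 1) ∧
      ∀ t ∈ Icc (0 : ℝ) 1, γ t ∈ Ω ∧ ball (γ t) (L * t / C) ⊆ Ω) :
    IsJohnDomain C Ω w₀ := by
  have hbounded : Ω ⊆ closedBall w₀ L := fun w hw => by
    obtain ⟨γ, hγ0, hγ1, hγL, -⟩ := hcurve w hw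
    simpa [hγ0, hγ1] using
      hγL.dist_le_mul 0 (left_mem_Icc.2 zero_le_one) 1 (right_mem_Icc.2 zero_le_one)
  have hfrontier : (frontier Ω).Nonempty := nonempty_frontier_iff.2
    ⟨⟨w₀, hw₀⟩, fun h => NormedSpace.unbounded_univ ℝ ℂ (h ▸ isBounded_closedBall.subset hbounded)⟩
  refine ⟨hw₀, fun w hw => ?_⟩
  obtain ⟨γ, hγ0, hγ1, hγL, hγΩ⟩ := hcurve w hw
  refine ⟨γ, hγL.continuousOn, hγ0, hγ1, fun t ht => (hγΩ t ht).1,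
    ne_top_of_le_ne_top (by finiteness) hγL.eVariationOn_Icc_le, fun t ht => ?_⟩
  have hvar : (eVariationOn γ (Icc 0 t)).toReal ≤ L * t := by
    refine ENNReal.toReal_le_of_le_ofReal (mul_nonneg L.coe_nonneg ht.1) ?_
    simpa [ENNReal.ofReal_mul] using (hγL.mono (Icc_subset_Icc_right ht.2)).eVariationOn_Icc_le
  calc (eVariationOn γ (Icc 0 t)).toReal ≤ L * t := hvar
    _ = C * (L * t / C) := by field_simp
    _ ≤ C * infDist (γ t) (frontier Ω) := mul_le_mul_of_nonneg_left
        (le_infDist_frontier_of_ball_subset hfrontier (hγΩ t ht).2) hC.le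

theorem Convex.sub_mul_norm_sub_le_norm_image_sub {𝕜 G : Type*} [RCLike 𝕜]
    [NormedAddCommGroup G] [NormedSpace 𝕜 G] {f : 𝕜 → G} {s : Set 𝕜} {A : G} {ε : ℝ}
    (hs : Convex ℝ s) (hf : ∀ w ∈ s, DifferentiableAt 𝕜 f w)
    (hA : ∀ w ∈ s, ‖deriv f w - A‖ ≤ ε) {z w : 𝕜} (hz : z ∈ s) (hw : w ∈ s) :
    (‖A‖ - ε) * ‖w - z‖ ≤ ‖f w - f z‖ := by
  have hderiv : ∀ w ∈ s, HasDerivAt (fun w => f w - w • A) (deriv f w - A) w := fun w hw =>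
    (hf w hw).hasDerivAt.fun_sub (by simpa using (hasDerivAt_id w).smul_const A)
  have hlin := hs.norm_image_sub_le_of_norm_hasDerivWithin_le
    (fun w hw => (hderiv w hw).hasDerivWithinAt) hA hz hw
  have hsplit : (w - z) • A = (f w - f z) - ((f w - w • A) - (f z - z • A)) := by
    rw [sub_smul]; abel
  have := norm_sub_le (f w - f z) ((f w - w • A) - (f z - z • A))
  rw [← hsplit, norm_smul] at this
  linarith

theorem ball_subset_image_ball_of_norm_deriv_bounds {f : ℂ → ℂ} {z : ℂ} {d μ Λ : ℝ}
    (hd : 0 ≤ d) (hμ : 0 ≤ μ) (hf : DifferentiableOn ℂ f (ball z d))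
    (hderiv : ∀ w ∈ ball z d, μ ≤ ‖deriv f w‖ ∧ ‖deriv f w‖ ≤ Λ) :
    ball (f z) (μ ^ 2 * d / (32 * Λ)) ⊆ f '' ball z d := by
  rcases hd.eq_or_lt with rfl | hd
  · simp
  rcases hμ.eq_or_lt with rfl | hμ
  · simp
  obtain ⟨hμA, hAΛ⟩ := hderiv z (mem_ball_self hd)
  set A := deriv f z
  have hΛ : 0 < Λ := hμ.trans_le (hμA.trans hAΛ)
  have hclose : ∀ w ∈ ball z d, ‖deriv f w - A‖ ≤ 2 * Λ / d * ‖w - z‖ := by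
    have hmaps : MapsTo (deriv f) (ball z d) (closedBall A (2 * Λ)) := fun w hw => by
      rw [mem_closedBall, dist_eq_norm]
      linarith [norm_sub_le (deriv f w) A, (hderiv w hw).2]
    intro w hw
    simpa [dist_eq_norm] using
      Complex.dist_le_div_mul_dist_of_mapsTo_ball (hf.deriv isOpen_ball) hmaps hw
  set ρ := μ * d / (8 * Λ)
  have hρ : 0 < ρ := by positivity
  have hρd : closedBall z ρ ⊆ ball z d := closedBall_subset_ball <| by
    rw [div_lt_iff₀ (by positivity)]; nlinarith
  have hnear : ∀ w ∈ closedBall z ρ, ‖deriv f w - A‖ ≤ μ / 4 := fun w hw => by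
    calc ‖deriv f w - A‖ ≤ 2 * Λ / d * ‖w - z‖ := hclose w (hρd hw)
      _ ≤ 2 * Λ / d * ρ := by gcongr; exact mem_closedBall_iff_norm.1 hw
      _ = μ / 4 := by simp only [ρ]; field_simp; ring
  have hexpand : ∀ w ∈ closedBall z ρ, 3 * μ / 4 * ‖w - z‖ ≤ ‖f w - f z‖ := fun w hw =>
    le_trans (by gcongr; linarith)
      ((convex_closedBall z ρ).sub_mul_norm_sub_le_norm_image_sub
        (fun w hw => hf.differentiableAt (isOpen_ball.mem_nhds (hρd hw))) hnear
        (mem_closedBall_self hρ.le) hw)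
  have hfreq : ∃ᶠ w in 𝓝 z, f w ≠ f z := by
    refine Filter.Frequently.filter_mono (f := 𝓝[≠] z) (Filter.Eventually.frequently ?_)
      nhdsWithin_le_nhds
    filter_upwards [nhdsWithin_le_nhds (closedBall_mem_nhds z hρ), self_mem_nhdsWithin]
      with w hw hwz heq
    have := hexpand w hw
    rw [heq, sub_self, norm_zero] at this
    have : 0 < ‖w - z‖ := norm_pos_iff.2 (sub_ne_zero.2 hwz)
    nlinarith
  have hsphere : ∀ w ∈ sphere z ρ, 3 * μ / 4 * ρ ≤ ‖f w - f z‖ := fun w hw => by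
    simpa [mem_sphere_iff_norm.1 hw] using hexpand w (sphere_subset_closedBall hw)
  calc ball (f z) (μ ^ 2 * d / (32 * Λ)) ⊆ ball (f z) (3 * μ / 4 * ρ / 2) :=
        ball_subset_ball (by simp only [ρ]; field_simp; nlinarith)
    _ ⊆ f '' closedBall z ρ :=
        (hf.diffContOnCl_ball hρd).ball_subset_image_closedBall hρ hsphere hfreq
    _ ⊆ f '' ball z d := image_mono hρd

theorem lipschitzOnWith_comp_lineMap {𝕜 G : Type*} [RCLike 𝕜] [NormedAddCommGroup G]
    [NormedSpace 𝕜 G] {f : 𝕜 → G} {s : Set 𝕜} {p q : 𝕜} {Λ : ℝ} (hs : segment ℝ p q ⊆ s)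
    (hf : ∀ w ∈ s, DifferentiableAt 𝕜 f w) (hbound : ∀ w ∈ s, ‖deriv f w‖ ≤ Λ) :
    LipschitzOnWith (Real.toNNReal (Λ * dist p q)) (f ∘ AffineMap.lineMap (k := ℝ) p q)
      (Icc 0 1) := by
  refine LipschitzOnWith.of_dist_le' fun t ht u hu => ?_
  calc dist (f (AffineMap.lineMap p q t)) (f (AffineMap.lineMap p q u))
      ≤ Λ * dist (AffineMap.lineMap p q t) (AffineMap.lineMap p q u) := by
        rw [dist_eq_norm, dist_eq_norm]
        exact (convex_segment p q).norm_image_sub_le_of_norm_deriv_le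
          (fun w hw => hf w (hs hw)) (fun w hw => hbound w (hs hw))
          (lineMap_mem_segment ℝ p q hu) (lineMap_mem_segment ℝ p q ht)
    _ = Λ * dist p q * dist t u := by rw [dist_lineMap_lineMap]; ring

def sawtoothCenter (x₀ y₀ : ℝ) : ℂ := ⟨x₀, 3 * y₀ / 4⟩

section Sawtooth

variable {E : Set ℝ} {x₀ y₀ : ℝ}

theorem ball_subset_sawtooth {z : ℂ} {δ : ℝ} (hleft : x₀ - y₀ / 2 + δ ≤ z.re)
    (hright : z.re + δ ≤ x₀ + y₀ / 2) (htop : z.im + δ ≤ y₀)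
    (hE : infDist z.re E + 2 * δ ≤ z.im) : ball z δ ⊆ Sawtooth E x₀ y₀ := by
  intro w hw
  have hw' : ‖w - z‖ < δ := mem_ball_iff_norm.1 hw
  have hre : |w.re - z.re| < δ := (Complex.abs_re_le_norm (w - z)).trans_lt hw'
  have him : |w.im - z.im| < δ := (Complex.abs_im_le_norm (w - z)).trans_lt hw'
  have hdist : infDist w.re E ≤ infDist z.re E + |w.re - z.re| := by
    simpa [Real.dist_eq] using infDist_le_infDist_add_dist (x := w.re) (y := z.re) (s := E)
  have := infDist_nonneg (x := z.re) (s := E)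
  have := abs_lt.1 hre
  have := abs_lt.1 him
  exact ⟨⟨by linarith, by linarith⟩, by linarith, by linarith, by linarith⟩

theorem sawtoothCenter_mem (hy₀ : 0 < y₀) (hE : E.Nonempty)
    (hEsub : E ⊆ Ioo (x₀ - y₀ / 2) (x₀ + y₀ / 2)) :
    sawtoothCenter x₀ y₀ ∈ Sawtooth E x₀ y₀ := by
  obtain ⟨e, he⟩ := hE
  have hx₀ : infDist x₀ E ≤ y₀ / 2 := by
    refine (infDist_le_dist_of_mem he).trans ?_
    rw [Real.dist_eq, abs_le]
    constructor <;> linarith [(hEsub he).1, (hEsub he).2]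
  refine ball_subset_sawtooth (δ := y₀ / 8) ?_ ?_ ?_ ?_ (mem_ball_self (by positivity)) <;>
    simp only [sawtoothCenter] <;> linarith

theorem ball_lineMap_sawtoothCenter_subset (hE : IsClosed E) (hEne : E.Nonempty)
    (hEsub : E ⊆ Ioo (x₀ - y₀ / 2) (x₀ + y₀ / 2)) {p : ℂ} (hp : p ∈ Sawtooth E x₀ y₀)
    {t : ℝ} (ht : t ∈ Icc (0 : ℝ) 1) :
    ball (AffineMap.lineMap p (sawtoothCenter x₀ y₀) t) (t * y₀ / 8) ⊆ Sawtooth E x₀ y₀ := by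
  obtain ⟨⟨hpl, hpr⟩, hpim, hpE, hptop⟩ := hp
  obtain ⟨ht0, ht1⟩ := ht
  obtain ⟨e, he, hpe⟩ := hE.exists_infDist_eq_dist hEne p.re
  set z := AffineMap.lineMap p (sawtoothCenter x₀ y₀) t
  have hre : z.re = (1 - t) * p.re + t * x₀ := by
    simp [z, AffineMap.lineMap_apply_module, sawtoothCenter]
  have him : z.im = (1 - t) * p.im + t * (3 * y₀ / 4) := by
    simp [z, AffineMap.lineMap_apply_module, sawtoothCenter]
  have hpe' : |p.re - e| ≤ p.im := by rwa [← Real.dist_eq, ← hpe]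
  have hxe : |x₀ - e| ≤ y₀ / 2 := by
    rw [abs_le]; constructor <;> linarith [(hEsub he).1, (hEsub he).2]
  have hze : infDist z.re E ≤ (1 - t) * p.im + t * (y₀ / 2) := by
    calc infDist z.re E ≤ |z.re - e| := by
          rw [← Real.dist_eq]; exact infDist_le_dist_of_mem he
      _ = |(1 - t) * (p.re - e) + t * (x₀ - e)| := by rw [hre]; ring_nf
      _ ≤ (1 - t) * |p.re - e| + t * |x₀ - e| := by
          refine (abs_add_le _ _).trans_eq ?_
          rw [abs_mul, abs_mul, abs_of_nonneg (by linarith), abs_of_nonneg ht0]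
      _ ≤ (1 - t) * p.im + t * (y₀ / 2) := by gcongr
  refine ball_subset_sawtooth ?_ ?_ ?_ ?_
  · rw [hre]; nlinarith
  · rw [hre]; nlinarith
  · rw [him]; nlinarith
  · rw [him]; linarith

theorem segment_sawtoothCenter_subset (hE : IsClosed E) (hEne : E.Nonempty)
    (hEsub : E ⊆ Ioo (x₀ - y₀ / 2) (x₀ + y₀ / 2)) {p : ℂ} (hp : p ∈ Sawtooth E x₀ y₀) :
    segment ℝ p (sawtoothCenter x₀ y₀) ⊆ Sawtooth E x₀ y₀ := by
  have hy₀ : 0 < y₀ := hp.2.1.trans hp.2.2.2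
  rw [segment_eq_image_lineMap]
  rintro _ ⟨t, ht, rfl⟩
  rcases ht.1.eq_or_lt with rfl | ht0
  · simpa using hp
  · exact ball_lineMap_sawtoothCenter_subset hE hEne hEsub hp ht (mem_ball_self (by positivity))

theorem dist_sawtoothCenter_le {p : ℂ} (hp : p ∈ Sawtooth E x₀ y₀) :
    dist p (sawtoothCenter x₀ y₀) ≤ 2 * y₀ := by
  obtain ⟨⟨hpl, hpr⟩, hpim, -, hptop⟩ := hp
  rw [dist_eq_norm]
  refine (Complex.norm_le_abs_re_add_abs_im _).trans ?_
  simp only [Complex.sub_re, Complex.sub_im, sawtoothCenter]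
  have hre : |p.re - x₀| ≤ y₀ / 2 := abs_le.2 ⟨by linarith, by linarith⟩
  have him : |p.im - 3 * y₀ / 4| ≤ 3 * y₀ / 4 := abs_le.2 ⟨by linarith, by linarith⟩
  linarith

end Sawtooth

/-- if the derivative of a conformal map `f` of `ℍ` is comparable to
`f'(z₀)` (within a factor `K`) on the sawtooth region `S(E)` over a nonempty compact set
`E ⊆ (x₀ - y₀/2, x₀ + y₀/2)`, then `f(S(E))` is a John domain with constant depending
only on `K`. -/
theorem image_sawtooth_is_john (K : ℝ) (hK : 1 ≤ K) :
    ∃ C : ℝ, 0 < C ∧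
      ∀ f : ℂ → ℂ, DifferentiableOn ℂ f UHP → Set.InjOn f UHP →
        ∀ z₀ ∈ UHP, ∀ E : Set ℝ, E.Nonempty → IsCompact E →
          E ⊆ Set.Ioo (z₀.re - z₀.im / 2) (z₀.re + z₀.im / 2) →
          (∀ w ∈ Sawtooth E z₀.re z₀.im,
            ‖deriv f z₀‖ / K ≤ ‖deriv f w‖ ∧ ‖deriv f w‖ ≤ K * ‖deriv f z₀‖) →
          ∃ w₀ ∈ f '' Sawtooth E z₀.re z₀.im,
            IsJohnDomain C (f '' Sawtooth E z₀.re z₀.im) w₀ := by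
  have hK0 : 0 < K := zero_lt_one.trans_le hK
  refine ⟨512 * K ^ 4, by positivity, ?_⟩
  intro f hf _ z₀ hz₀ E hEne hEcomp hEsub hderiv
  set S := Sawtooth E z₀.re z₀.im
  set q := sawtoothCenter z₀.re z₀.im
  set m := ‖deriv f z₀‖
  have hy₀ : 0 < z₀.im := hz₀
  have hKm : 0 ≤ K * m := mul_nonneg hK0.le (norm_nonneg _)
  have hSU : S ⊆ UHP := fun w hw => hw.2.1
  have hfS : ∀ w ∈ S, DifferentiableAt ℂ f w := fun w hw =>
    hf.differentiableAt (isOpen_UHP.mem_nhds (hSU hw))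
  have hq : f q ∈ f '' S := mem_image_of_mem f (sawtoothCenter_mem hz₀ hEne hEsub)
  refine ⟨f q, hq, isJohnDomain_of_lipschitz_curves (L := Real.toNNReal (2 * K * m * z₀.im))
    (by positivity) hq ?_⟩
  rintro _ ⟨p, hp, rfl⟩
  have hseg := segment_sawtoothCenter_subset hEcomp.isClosed hEne hEsub hp
  refine ⟨f ∘ AffineMap.lineMap p q, by simp, by simp, ?_, fun t ht =>
    ⟨mem_image_of_mem f (hseg (lineMap_mem_segment ℝ p q ht)), ?_⟩⟩
  · refine (lipschitzOnWith_comp_lineMap hseg hfS fun w hw => (hderiv w hw).2).weaken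
      (Real.toNNReal_le_toNNReal ?_)
    nlinarith [dist_sawtoothCenter_le hp]
  · have hball := ball_lineMap_sawtoothCenter_subset hEcomp.isClosed hEne hEsub hp ht
    have hradius : (Real.toNNReal (2 * K * m * z₀.im) : ℝ) * t / (512 * K ^ 4) =
        (m / K) ^ 2 * (t * z₀.im / 8) / (32 * (K * m)) := by
      rw [Real.coe_toNNReal _ (by nlinarith)]
      rcases eq_or_ne m 0 with hm | hm
      · simp [hm]
      · field_simp; ring
    rw [hradius]
    exact (ball_subset_image_ball_of_norm_deriv_bounds
      (div_nonneg (mul_nonneg ht.1 hy₀.le) (by norm_num)) (div_nonneg (norm_nonneg _) hK0.le)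
      (hf.mono (hball.trans hSU)) fun w hw => hderiv w (hball hw)).trans (image_mono hball)
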